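/- arXiv:0809.2057 — 3 statements merged into one kernel-verified Lean document; each statement's English description precedes it below -/
import Mathlib

section
/- For λ > 0, let M^λ_j = exp(λ·j²/4) and let g_λ : ℝ → ℝ be defined by g_λ(x) = exp(−(ln x)²/λ) for x > 0 and g_λ(x) = 0 for x ≤ 0. Then for every μ with 0 < μ < λ, the germ of g_λ at 0 does NOT belong to E_1(M^μ): for every δ > 0 and all sufficiently large j, sup_{0<t<δ} |g_λ^{(j)}(t)| ≥ j!·exp(λ·j²/4), so no constants C, σ > 0 can give |g_λ^{(j)}(x)| ≤ C·σ^j·j!·exp(μ·j²/4) on a neighborhood of 0. -/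
open Set Filter Topology

noncomputable section

/-- The germ at `0` of `h : ℝ → ℝ` belongs to the Denjoy–Carleman class `E₁(M)`. -/
def GermInDC (M : ℕ → ℝ) (h : ℝ → ℝ) : Prop :=
  ∃ ε > (0:ℝ), ∃ C > (0:ℝ), ∃ σ > (0:ℝ),
    ContDiffOn ℝ (⊤ : ℕ∞) h (Ioo (-ε) ε) ∧
    ∀ (j : ℕ), ∀ x ∈ Ioo (-ε) ε,
      |iteratedDeriv j h x| ≤ C * σ ^ j * (Nat.factorial j : ℝ) * M j

/-- The function `g_λ`. -/
def gfun (lam : ℝ) : ℝ → ℝ := fun x =>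
  if 0 < x then Real.exp (-(Real.log x) ^ 2 / lam) else 0

/-- Auxiliary polynomials appearing in the derivatives of `g_λ` on `(0,∞)`. -/
def pseq (lam : ℝ) : ℕ → Polynomial ℝ
  | 0 => 1
  | (k+1) => Polynomial.derivative (pseq lam k) - Polynomial.C (k:ℝ) * pseq lam k
      - Polynomial.C (2/lam) * Polynomial.X * pseq lam k

/-- Closed form of the `n`-th derivative of `g_λ` on `(0,∞)`. -/
def Ffun (lam : ℝ) (n : ℕ) (t : ℝ) : ℝ :=
  (pseq lam n).eval (Real.log t) * t ^ (-(n:ℤ)) * Real.exp (-(Real.log t) ^ 2 / lam)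

lemma hasDerivAt_Ffun (lam : ℝ) (n : ℕ) {t : ℝ} (ht : 0 < t) :
    HasDerivAt (Ffun lam n) (Ffun lam (n+1) t) t := by
  have ht' : t ≠ 0 := ne_of_gt ht
  have hA : HasDerivAt (fun s => (pseq lam n).eval (Real.log s))
      ((Polynomial.derivative (pseq lam n)).eval (Real.log t) * t⁻¹) t :=
    ((pseq lam n).hasDerivAt (Real.log t)).comp t (Real.hasDerivAt_log ht')
  have hB := hasDerivAt_zpow (-(n:ℤ)) t (Or.inl ht')
  have hq : HasDerivAt (fun s => -(Real.log s) ^ 2 / lam)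
      (-((2:ℕ) * Real.log t ^ (2-1) * t⁻¹) / lam) t :=
    (((Real.hasDerivAt_log ht').pow 2).neg).div_const lam
  have hC : HasDerivAt (fun s => Real.exp (-(Real.log s) ^ 2 / lam))
      (Real.exp (-(Real.log t) ^ 2 / lam) * (-((2:ℕ) * Real.log t ^ (2-1) * t⁻¹) / lam)) t :=
    hq.exp
  have hF : HasDerivAt (fun s => (pseq lam n).eval (Real.log s) * s ^ (-(n:ℤ))
      * Real.exp (-(Real.log s) ^ 2 / lam)) _ t := (hA.mul hB).mul hC
  have hz : t ^ (-(n:ℤ) - 1) = t ^ (-(n:ℤ)) * t⁻¹ := zpow_sub_one₀ ht' _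
  have hz' : t ^ (-((n+1 : ℕ) : ℤ)) = t ^ (-(n:ℤ)) * t⁻¹ := by
    rw [show (-((n+1 : ℕ):ℤ)) = -(n:ℤ) - 1 by push_cast; ring, hz]
  rw [show Ffun lam n = fun s => (pseq lam n).eval (Real.log s) * s ^ (-(n:ℤ))
      * Real.exp (-(Real.log s) ^ 2 / lam) from rfl]
  convert hF using 1
  simp only [Ffun, pseq, Polynomial.eval_sub, Polynomial.eval_mul, Polynomial.eval_C,
    Polynomial.eval_X, hz', hz, Pi.mul_apply]
  push_cast
  ring

lemma iteratedDeriv_gfun {lam : ℝ} (n : ℕ) :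
    ∀ t : ℝ, 0 < t → iteratedDeriv n (gfun lam) t = Ffun lam n t := by
  induction n with
  | zero =>
    intro t ht
    simp [gfun, Ffun, pseq, if_pos ht]
  | succ n ih =>
    intro t ht
    rw [iteratedDeriv_succ]
    have heq : iteratedDeriv n (gfun lam) =ᶠ[𝓝 t] Ffun lam n :=
      Filter.eventually_of_mem (isOpen_Ioi.mem_nhds ht) (fun s hs => ih s hs)
    rw [heq.deriv_eq]
    exact (hasDerivAt_Ffun lam n ht).deriv

lemma iteratedDerivWithin_gfun {lam : ℝ} {a x : ℝ} (ha : 0 < a) (hax : a < x) (n : ℕ) :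
    ∀ t ∈ Icc a x, iteratedDerivWithin n (gfun lam) (Icc a x) t = Ffun lam n t := by
  have hu : UniqueDiffOn ℝ (Icc a x) := uniqueDiffOn_Icc hax
  induction n with
  | zero =>
    intro t ht
    have htpos : 0 < t := lt_of_lt_of_le ha ht.1
    rw [iteratedDerivWithin_zero]
    simp [gfun, Ffun, pseq, if_pos htpos]
  | succ n ih =>
    intro t ht
    have htpos : 0 < t := lt_of_lt_of_le ha ht.1
    rw [iteratedDerivWithin_succ, derivWithin_congr ih (ih t ht),
      (hasDerivAt_Ffun lam n htpos).differentiableAt.derivWithin (hu t ht)]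
    exact (hasDerivAt_Ffun lam n htpos).deriv

lemma tendsto_Ffun_zero {lam : ℝ} (hlam : 0 < lam) (n : ℕ) :
    Tendsto (Ffun lam n) (𝓝[>] (0:ℝ)) (𝓝 0) := by
  set p := pseq lam n with hp
  set q := p.comp (-Polynomial.X) with hqdef
  set G : ℝ → ℝ := fun u => p.eval u * Real.exp (-((n:ℝ) * u)) * Real.exp (-u ^ 2 / lam)
    with hG
  have hGtend : Tendsto G atBot (𝓝 0) := by
    have hq : Tendsto (fun v : ℝ => |q.eval v| / Real.exp v) atTop (𝓝 0) := by
      have h := (q.tendsto_div_exp_atTop).abs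
      simpa [abs_div, abs_of_pos (Real.exp_pos _)] using h
    have hGneg : Tendsto (fun v : ℝ => G (-v)) atTop (𝓝 0) := by
      apply squeeze_zero_norm' _ hq
      filter_upwards [eventually_ge_atTop (lam * (n+1)), eventually_ge_atTop 0] with v hv hv0
      have hqe : q.eval v = p.eval (-v) := by
        simp [hqdef, Polynomial.eval_comp]
      have hw : lam * (-(-v) ^ 2 / lam) = -(v ^ 2) := by field_simp
      have harg : -((n:ℝ) * (-v)) + -(-v) ^ 2 / lam ≤ -v := by
        nlinarith [hw, mul_nonneg (sub_nonneg.mpr hv) hv0, hlam]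
      calc ‖G (-v)‖ = |p.eval (-v)| * Real.exp (-((n:ℝ) * (-v)) + -(-v) ^ 2 / lam) := by
            rw [hG]
            simp only [Real.norm_eq_abs, abs_mul, Real.abs_exp]
            rw [mul_assoc, ← Real.exp_add]
        _ ≤ |p.eval (-v)| * Real.exp (-v) := by
            exact mul_le_mul_of_nonneg_left (Real.exp_le_exp.mpr harg) (abs_nonneg _)
        _ = |q.eval v| / Real.exp v := by
            rw [hqe, Real.exp_neg, div_eq_mul_inv]
    have hcomp : Tendsto (fun u : ℝ => -u) atBot atTop := tendsto_neg_atBot_atTop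
    have := hGneg.comp hcomp
    simpa [Function.comp_def] using this
  have hFG : ∀ᶠ t in 𝓝[>] (0:ℝ), G (Real.log t) = Ffun lam n t := by
    filter_upwards [self_mem_nhdsWithin] with t ht
    have ht : (0:ℝ) < t := ht
    have hzp : t ^ (-(n:ℤ)) = Real.exp (-((n:ℝ) * Real.log t)) := by
      rw [zpow_neg, zpow_natCast, Real.exp_neg]
      congr 1
      rw [Real.exp_nat_mul, Real.exp_log ht]
    rw [hG, Ffun, hzp]
  exact Tendsto.congr' hFG (hGtend.comp Real.tendsto_log_nhdsGT_zero)

lemma contDiffOn_gfun (lam : ℝ) (m : ℕ∞) : ContDiffOn ℝ m (gfun lam) (Ioi 0) := by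
  have h : ContDiffOn ℝ m (fun t => Real.exp (-(Real.log t) ^ 2 / lam)) (Ioi 0) := by
    apply ContDiffOn.exp
    apply ContDiffOn.div_const
    apply ContDiffOn.neg
    exact (Real.contDiffOn_log.mono (fun t ht => by simpa using ne_of_gt ht)).pow 2
  exact h.congr (fun t ht => if_pos ht)

lemma key_lemma {lam : ℝ} (hlam : 0 < lam) {δ : ℝ} (hδ : 0 < δ) (j : ℕ) (hj : 1 ≤ j)
    (hxδ : Real.exp (-(lam * j) / 2) < δ) :
    ∃ t ∈ Ioo (0:ℝ) δ,
      (Nat.factorial j : ℝ) * Real.exp (lam * (j:ℝ) ^ 2 / 4)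
        ≤ |iteratedDeriv j (gfun lam) t| := by
  set x : ℝ := Real.exp (-(lam * j) / 2) with hxdef
  have hx0 : 0 < x := Real.exp_pos _
  set ψ : ℝ → ℝ := fun t => if 0 < t then |Ffun lam j t| else 0 with hψ
  have hψnonneg : ∀ t, 0 ≤ ψ t := by
    intro t
    by_cases h : 0 < t <;> simp [hψ, h, abs_nonneg]
  -- continuity of ψ on [0, x]
  have hcont : ContinuousOn ψ (Icc 0 x) := by
    intro t ht
    rcases eq_or_lt_of_le ht.1 with rfl | htpos
    · -- t = 0
      have h1 : Tendsto ψ (𝓝[>] (0:ℝ)) (𝓝 0) := by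
        have h := (tendsto_Ffun_zero hlam j).abs
        rw [abs_zero] at h
        apply h.congr'
        filter_upwards [self_mem_nhdsWithin] with s hs
        simp [hψ, if_pos (show (0:ℝ) < s from hs)]
      have h2 : Tendsto ψ (𝓝[Ici (0:ℝ)] 0) (𝓝 0) := by
        rw [← Set.Ioi_insert, nhdsWithin_insert, tendsto_sup]
        constructor
        · have h0 := tendsto_pure_nhds ψ 0
          rwa [show ψ (0:ℝ) = 0 from by simp [hψ]] at h0
        · exact h1
      have : Tendsto ψ (𝓝[Icc (0:ℝ) x] 0) (𝓝 0) :=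
        h2.mono_left (nhdsWithin_mono _ Icc_subset_Ici_self)
      simpa [ContinuousWithinAt, hψ] using this
    · -- 0 < t
      have hFc : ContinuousOn (fun s => |Ffun lam j s|) (Ioi (0:ℝ)) := fun s hs =>
        ((hasDerivAt_Ffun lam j hs).differentiableAt.continuousAt.continuousWithinAt).abs
      have hψIoi : ContinuousOn ψ (Ioi (0:ℝ)) :=
        hFc.congr (fun s hs => by simp [hψ, if_pos (show (0:ℝ) < s from hs)])
      exact (hψIoi.continuousAt (isOpen_Ioi.mem_nhds htpos)).continuousWithinAt
  obtain ⟨t₀, ht₀S, ht₀max⟩ := isCompact_Icc.exists_isMaxOn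
    (nonempty_Icc.mpr hx0.le) hcont
  set Mx : ℝ := ψ t₀ with hMx
  have hMx0 : 0 ≤ Mx := hψnonneg t₀
  have hfacpos : (0:ℝ) < (Nat.factorial j : ℝ) := Nat.cast_pos.mpr (Nat.factorial_pos j)
  have hxppos : (0:ℝ) < x ^ j := pow_pos hx0 j
  -- Taylor step: gfun lam x ≤ Mx * x^j / j!
  set S : ℝ → ℝ := fun a => ∑ k ∈ Finset.range j,
      ((Nat.factorial k : ℝ)⁻¹ * (x - a) ^ k) * Ffun lam k a with hS
  have stepA : ∀ a ∈ Ioo (0:ℝ) x,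
      gfun lam x ≤ |S a| + Mx * x ^ j / (Nat.factorial j : ℝ) := by
    intro a ha
    have hIccsub : Icc a x ⊆ Ioi (0:ℝ) := fun s hs => lt_of_lt_of_le ha.1 hs.1
    have hcd : ContDiffOn ℝ (j-1 : ℕ) (gfun lam) (Icc a x) :=
      (contDiffOn_gfun lam (j-1 : ℕ)).mono hIccsub
    have hdiff : DifferentiableOn ℝ
        (iteratedDerivWithin (j-1) (gfun lam) (Icc a x)) (Ioo a x) := by
      intro s hs
      have hspos : 0 < s := lt_trans ha.1 hs.1
      have hd : DifferentiableWithinAt ℝ (Ffun lam (j-1)) (Ioo a x) s :=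
        (hasDerivAt_Ffun lam (j-1) hspos).differentiableAt.differentiableWithinAt
      exact hd.congr
        (fun y hy => iteratedDerivWithin_gfun ha.1 ha.2 (j-1) y (Ioo_subset_Icc_self hy))
        (iteratedDerivWithin_gfun ha.1 ha.2 (j-1) s (Ioo_subset_Icc_self hs))
    obtain ⟨ξ, hξ, hTay⟩ := taylor_mean_remainder_lagrange ha.2.ne
      (by rwa [Set.uIcc_of_le ha.2.le]) (by rwa [Set.uIcc_of_le ha.2.le, Set.uIoo_of_le ha.2.le])
    rw [Set.uIcc_of_le ha.2.le] at hTay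
    rw [Set.uIoo_of_le ha.2.le] at hξ
    rw [Nat.sub_add_cancel hj] at hTay
    have hξpos : 0 < ξ := lt_trans ha.1 hξ.1
    have hξval : iteratedDerivWithin j (gfun lam) (Icc a x) ξ = Ffun lam j ξ :=
      iteratedDerivWithin_gfun ha.1 ha.2 j ξ (Ioo_subset_Icc_self hξ)
    have hξle : |Ffun lam j ξ| ≤ Mx := by
      have hmem : ξ ∈ Icc (0:ℝ) x := ⟨hξpos.le, hξ.2.le⟩
      have := ht₀max hmem
      simpa [hψ, if_pos hξpos, hMx] using this
    have hTayEq : taylorWithinEval (gfun lam) (j-1) (Icc a x) a x = S a := by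
      rw [taylor_within_apply, Nat.sub_add_cancel hj]
      apply Finset.sum_congr rfl
      intro k hk
      rw [iteratedDerivWithin_gfun ha.1 ha.2 k a (left_mem_Icc.mpr ha.2.le)]
      simp [smul_eq_mul]
    have hrem : |iteratedDerivWithin j (gfun lam) (Icc a x) ξ * (x - a) ^ j
        / (Nat.factorial j : ℝ)| ≤ Mx * x ^ j / (Nat.factorial j : ℝ) := by
      rw [abs_div, abs_mul, abs_of_pos hfacpos]
      have h1 : |(x - a) ^ j| ≤ x ^ j := by
        rw [abs_pow, abs_of_nonneg (sub_nonneg.mpr ha.2.le)]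
        exact pow_le_pow_left₀ (sub_nonneg.mpr ha.2.le) (by linarith [ha.1]) j
      have h2 : |iteratedDerivWithin j (gfun lam) (Icc a x) ξ| * |(x - a) ^ j|
          ≤ Mx * x ^ j := by
        apply mul_le_mul _ h1 (abs_nonneg _) hMx0
        rw [hξval]; exact hξle
      exact div_le_div_of_nonneg_right h2 hfacpos.le
    have : gfun lam x = taylorWithinEval (gfun lam) (j-1) (Icc a x) a x
        + iteratedDerivWithin j (gfun lam) (Icc a x) ξ * (x - a) ^ j
          / (Nat.factorial j : ℝ) := by
      linarith [hTay]
    calc gfun lam x ≤ |gfun lam x| := le_abs_self _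
      _ ≤ |taylorWithinEval (gfun lam) (j-1) (Icc a x) a x|
          + |iteratedDerivWithin j (gfun lam) (Icc a x) ξ * (x - a) ^ j
            / (Nat.factorial j : ℝ)| := by rw [this]; exact abs_add_le _ _
      _ ≤ |S a| + Mx * x ^ j / (Nat.factorial j : ℝ) := by
          rw [hTayEq]; exact add_le_add_right hrem _
  -- limit as a → 0⁺
  have stepB : Tendsto (fun a => |S a|) (𝓝[>] (0:ℝ)) (𝓝 0) := by
    have h : Tendsto S (𝓝[>] (0:ℝ)) (𝓝 0) := by
      have : Tendsto S (𝓝[>] (0:ℝ))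
          (𝓝 (∑ k ∈ Finset.range j, ((Nat.factorial k : ℝ)⁻¹ * (x - 0) ^ k) * 0)) := by
        apply tendsto_finset_sum
        intro k _
        apply Tendsto.mul _ (tendsto_Ffun_zero hlam k)
        apply Tendsto.mono_left _ nhdsWithin_le_nhds
        exact (tendsto_const_nhds.mul ((tendsto_const_nhds.sub tendsto_id).pow k))
      simpa using this
    have := h.abs
    simpa using this
  have claim : gfun lam x ≤ Mx * x ^ j / (Nat.factorial j : ℝ) := by
    have hne : (𝓝[Ioo (0:ℝ) x] 0).NeBot := left_nhdsWithin_Ioo_neBot hx0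
    have hle : 𝓝[Ioo (0:ℝ) x] (0:ℝ) ≤ 𝓝[>] (0:ℝ) := nhdsWithin_mono _ Ioo_subset_Ioi_self
    have htend : Tendsto (fun a => |S a| + Mx * x ^ j / (Nat.factorial j : ℝ))
        (𝓝[Ioo (0:ℝ) x] 0) (𝓝 (0 + Mx * x ^ j / (Nat.factorial j : ℝ))) :=
      ((stepB.mono_left hle).add tendsto_const_nhds)
    rw [zero_add] at htend
    apply ge_of_tendsto htend
    filter_upwards [self_mem_nhdsWithin] with a ha
    exact stepA a ha
  -- compute gfun lam x and x^j
  have hgx : gfun lam x = Real.exp (-(lam * (j:ℝ) ^ 2) / 4) := by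
    rw [gfun]
    rw [if_pos hx0, hxdef, Real.log_exp]
    congr 1
    field_simp
    ring
  have hxj : x ^ j = Real.exp ((j:ℝ) * (-(lam * j) / 2)) := (Real.exp_nat_mul _ j).symm
  -- conclude target ≤ Mx
  have htarget : (Nat.factorial j : ℝ) * Real.exp (lam * (j:ℝ) ^ 2 / 4) ≤ Mx := by
    rw [hgx] at claim
    have h1 : Real.exp (-(lam * (j:ℝ) ^ 2) / 4) * (Nat.factorial j : ℝ) ≤ Mx * x ^ j :=
      (le_div_iff₀ hfacpos).mp claim
    have h2 : Real.exp (lam * (j:ℝ) ^ 2 / 4)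
        = Real.exp (-(lam * (j:ℝ) ^ 2) / 4) / x ^ j := by
      rw [hxj, ← Real.exp_sub]
      congr 1
      ring
    rw [h2]
    rw [mul_div_assoc', div_le_iff₀ hxppos]
    linarith [h1]
  have hMxpos : 0 < Mx :=
    lt_of_lt_of_le (mul_pos hfacpos (Real.exp_pos _)) htarget
  have ht₀pos : 0 < t₀ := by
    by_contra h
    push_neg at h
    have : ψ t₀ = 0 := by simp [hψ, not_lt.mpr h]
    rw [hMx, this] at hMxpos
    exact lt_irrefl _ hMxpos
  refine ⟨t₀, ⟨ht₀pos, lt_of_le_of_lt ht₀S.2 hxδ⟩, ?_⟩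
  rw [iteratedDeriv_gfun j t₀ ht₀pos]
  have : ψ t₀ = |Ffun lam j t₀| := by simp [hψ, if_pos ht₀pos]
  rw [← this]
  exact htarget

/-- `g_λ` does not belong to `E₁(M^μ)` for `μ < λ`: for every `δ > 0` and all
sufficiently large `j`, the sup of `|g_λ^(j)|` on `(0,δ)` is at least
`j!·exp(λ j²/4)`, and no constants `C, σ` give the `E₁(M^μ)` bounds near `0`. -/
theorem gfun_not_in_smaller_class (lam : ℝ) (hlam : 0 < lam) :
    (∀ δ > (0:ℝ), ∃ N : ℕ, ∀ j ≥ N, ∃ t ∈ Ioo (0:ℝ) δ,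
      (Nat.factorial j : ℝ) * Real.exp (lam * (j:ℝ) ^ 2 / 4)
        ≤ |iteratedDeriv j (gfun lam) t|) ∧
    (∀ μ : ℝ, 0 < μ → μ < lam →
      ¬ GermInDC (fun j => Real.exp (μ * (j:ℝ) ^ 2 / 4)) (gfun lam)) := by
  have part1 : ∀ δ > (0:ℝ), ∃ N : ℕ, ∀ j ≥ N, ∃ t ∈ Ioo (0:ℝ) δ,
      (Nat.factorial j : ℝ) * Real.exp (lam * (j:ℝ) ^ 2 / 4)
        ≤ |iteratedDeriv j (gfun lam) t| := by
    intro δ hδ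
    refine ⟨max 1 (Nat.ceil (-2 * Real.log δ / lam) + 1), fun j hj => ?_⟩
    have hj1 : 1 ≤ j := le_trans (le_max_left _ _) hj
    have hjc : Nat.ceil (-2 * Real.log δ / lam) + 1 ≤ j := le_trans (le_max_right _ _) hj
    have hjR : -2 * Real.log δ / lam < (j : ℝ) := by
      have h1 : -2 * Real.log δ / lam ≤ (Nat.ceil (-2 * Real.log δ / lam) : ℝ) :=
        Nat.le_ceil _
      have h2 : ((Nat.ceil (-2 * Real.log δ / lam) : ℕ) : ℝ) < (j : ℝ) := by
        exact_mod_cast Nat.lt_of_lt_of_le (Nat.lt_succ_self _) hjc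
      linarith
    have hxδ : Real.exp (-(lam * j) / 2) < δ := by
      rw [← Real.lt_log_iff_exp_lt hδ]
      rw [div_lt_iff₀ hlam] at hjR
      linarith
    exact key_lemma hlam hδ j hj1 hxδ
  refine ⟨part1, ?_⟩
  rintro μ hμ hμlam ⟨ε, hε, C, hC, σ, hσ, _, hbound⟩
  obtain ⟨N, hN⟩ := part1 ε hε
  set c : ℝ := (lam - μ) / 4 with hc
  have hcpos : 0 < c := by rw [hc]; linarith
  set j : ℕ := max N (max 1 (Nat.ceil ((|Real.log C| + |Real.log σ| + 1) / c))) with hjdef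
  have hjN : N ≤ j := le_max_left _ _
  have hj1 : 1 ≤ j := le_trans (le_max_left _ _) (le_max_right _ _)
  have hjc : (|Real.log C| + |Real.log σ| + 1) / c ≤ (j : ℝ) := by
    have h1 : (|Real.log C| + |Real.log σ| + 1) / c
        ≤ (Nat.ceil ((|Real.log C| + |Real.log σ| + 1) / c) : ℝ) := Nat.le_ceil _
    have h2 : (Nat.ceil ((|Real.log C| + |Real.log σ| + 1) / c) : ℕ) ≤ j :=
      le_trans (le_max_right _ _) (le_max_right _ _)
    exact h1.trans (by exact_mod_cast h2)
  obtain ⟨t, ht, hlow⟩ := hN j hjN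
  have htmem : t ∈ Ioo (-ε) ε := ⟨lt_trans (neg_lt_zero.mpr hε) ht.1, ht.2⟩
  have hup := hbound j t htmem
  have hfacpos : (0:ℝ) < (Nat.factorial j : ℝ) := Nat.cast_pos.mpr (Nat.factorial_pos j)
  -- combine
  have hcomb : (Nat.factorial j : ℝ) * Real.exp (lam * (j:ℝ) ^ 2 / 4)
      ≤ C * σ ^ j * (Nat.factorial j : ℝ) * Real.exp (μ * (j:ℝ) ^ 2 / 4) :=
    le_trans hlow hup
  have hkey : Real.exp (c * (j:ℝ) ^ 2) ≤ C * σ ^ j := by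
    have hexp : Real.exp (lam * (j:ℝ) ^ 2 / 4)
        = Real.exp (c * (j:ℝ) ^ 2) * Real.exp (μ * (j:ℝ) ^ 2 / 4) := by
      rw [← Real.exp_add]; congr 1; rw [hc]; ring
    rw [hexp] at hcomb
    have hexppos : (0:ℝ) < Real.exp (μ * (j:ℝ) ^ 2 / 4) := Real.exp_pos _
    have hprod : (0:ℝ) < (Nat.factorial j : ℝ) * Real.exp (μ * (j:ℝ) ^ 2 / 4) :=
      mul_pos hfacpos hexppos
    have h' : Real.exp (c * (j:ℝ) ^ 2) * ((Nat.factorial j : ℝ) * Real.exp (μ * (j:ℝ) ^ 2 / 4))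
        ≤ C * σ ^ j * ((Nat.factorial j : ℝ) * Real.exp (μ * (j:ℝ) ^ 2 / 4)) := by
      linarith [hcomb]
    exact le_of_mul_le_mul_right h' hprod
  -- take logs
  have hCσpos : (0:ℝ) < C * σ ^ j := mul_pos hC (pow_pos hσ j)
  have hlog : c * (j:ℝ) ^ 2 ≤ Real.log C + (j:ℝ) * Real.log σ := by
    have := Real.log_le_log (Real.exp_pos _) hkey
    rwa [Real.log_exp, Real.log_mul (ne_of_gt hC) (ne_of_gt (pow_pos hσ j)),
      Real.log_pow] at this
  -- contradiction
  have hjR1 : (1:ℝ) ≤ (j:ℝ) := by exact_mod_cast hj1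
  have hcj : |Real.log C| + |Real.log σ| + 1 ≤ c * (j:ℝ) := by
    rw [div_le_iff₀ hcpos] at hjc
    linarith [hjc]
  have hfinal : c * (j:ℝ) ^ 2 > Real.log C + (j:ℝ) * Real.log σ := by
    have h1 : c * (j:ℝ) ^ 2 = (j:ℝ) * (c * (j:ℝ)) := by ring
    have h2 : (j:ℝ) * (c * (j:ℝ)) ≥ (j:ℝ) * (|Real.log C| + |Real.log σ| + 1) :=
      mul_le_mul_of_nonneg_left hcj (by linarith)
    have h3 : (j:ℝ) * (|Real.log C| + |Real.log σ| + 1)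
        ≥ |Real.log C| + (j:ℝ) * |Real.log σ| + 1 := by nlinarith [abs_nonneg (Real.log C), abs_nonneg (Real.log σ)]
    have h4 : Real.log C ≤ |Real.log C| := le_abs_self _
    have h5 : (j:ℝ) * Real.log σ ≤ (j:ℝ) * |Real.log σ| :=
      mul_le_mul_of_nonneg_left (le_abs_self _) (by linarith)
    linarith
  linarith
end
end

section
/- Let M : ℕ → ℝ be a sequence of positive reals with M_0 = 1, M increasing, M logarithmically convex, and satisfying the derivability condition sup_{j≥1} (M_{j+1}/M_j)^{1/j} < ∞. Then for every real ν > 0 there exist constants C(ν) > 0 and K(ν) ≥ 1 such that t^{−ν}·h_M(t) ≤ C(ν)·h_M(K(ν)·t) for all t > 0, where h_M(t) = inf_{j≥0} t^j·M_j. -/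
/-!
The derivability condition gives `M (j+1) ≤ D^(j+1) * M j` for a single `D ≥ 1`, and iterating
it `n` times yields `M (k+n) ≤ D^(n*n) * (D^n)^k * M k`. Take `n = ⌈ν⌉`. For `t ≤ 1` we have
`t^(-ν) * t^(k+n) ≤ t^k`, so bounding `h_M(t)` by its `(k+n)`-th term gives
`t^(-ν) h_M(t) ≤ D^(n*n) (D^n t)^k M_k` for every `k`; for `t ≥ 1` simply `t^(-ν) ≤ 1`.
-/

open Set Filter Topology

noncomputable section

/-- The function `h_M` associated with the sequence `M`:
`h_M(t) = inf_{j≥0} t^j·M_j` for `t ≠ 0`, and `h_M(0) = 0`. -/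
def hFun (M : ℕ → ℝ) (t : ℝ) : ℝ := if t = 0 then 0 else ⨅ j : ℕ, t ^ j * M j

section hFun

variable {M : ℕ → ℝ} {t : ℝ}

theorem hFun_of_ne_zero (ht : t ≠ 0) : hFun M t = ⨅ j : ℕ, t ^ j * M j := if_neg ht

theorem bddBelow_range_pow_mul (hpos : ∀ j, 0 < M j) (ht : 0 ≤ t) :
    BddBelow (range fun j : ℕ => t ^ j * M j) :=
  ⟨0, by rintro _ ⟨j, rfl⟩; exact mul_nonneg (pow_nonneg ht j) (hpos j).le⟩

theorem hFun_le_pow_mul (hpos : ∀ j, 0 < M j) (ht : 0 < t) (j : ℕ) :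
    hFun M t ≤ t ^ j * M j := by
  rw [hFun_of_ne_zero ht.ne']
  exact ciInf_le (bddBelow_range_pow_mul hpos ht.le) j

theorem hFun_nonneg (hpos : ∀ j, 0 < M j) (ht : 0 < t) : 0 ≤ hFun M t := by
  rw [hFun_of_ne_zero ht.ne']
  exact le_ciInf fun j => mul_nonneg (pow_nonneg ht.le j) (hpos j).le

theorem le_mul_hFun {a C : ℝ} (hC : 0 ≤ C) (ht : t ≠ 0) (h : ∀ j, a ≤ C * (t ^ j * M j)) :
    a ≤ C * hFun M t := by
  rw [hFun_of_ne_zero ht, Real.mul_iInf_of_nonneg hC]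
  exact le_ciInf h

end hFun

theorem exists_succ_le_pow_mul_of_derivable {M : ℕ → ℝ} (hpos : ∀ j, 0 < M j)
    (hder : ∃ A : ℝ, ∀ j : ℕ, 1 ≤ j → (M (j+1) / M j) ^ ((1:ℝ)/(j:ℝ)) ≤ A) :
    ∃ D ≥ (1:ℝ), ∀ j, M (j + 1) ≤ D ^ (j + 1) * M j := by
  obtain ⟨A, hA⟩ := hder
  have hA0 : 0 ≤ A := (Real.rpow_nonneg (div_pos (hpos 2) (hpos 1)).le _).trans (hA 1 le_rfl)
  have hratio : ∀ j, 1 ≤ j → M (j + 1) / M j ≤ A ^ j := fun j hj => by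
    have hj : (0:ℝ) < j := by exact_mod_cast hj
    rw [← Real.rpow_natCast, ← Real.rpow_inv_le_iff_of_pos (div_pos (hpos _) (hpos j)).le hA0 hj,
      ← one_div]
    exact hA j (by exact_mod_cast hj)
  refine ⟨max (max A 1) (M 1 / M 0), le_max_of_le_left (le_max_right _ _), fun j => ?_⟩
  set D := max (max A 1) (M 1 / M 0)
  rw [← div_le_iff₀ (hpos j)]
  rcases Nat.eq_zero_or_pos j with rfl | hj
  · simpa only [zero_add, pow_one] using le_max_right (max A 1) (M 1 / M 0)
  · calc M (j + 1) / M j ≤ A ^ j := hratio j hj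
      _ ≤ D ^ j := pow_le_pow_left₀ hA0 (le_max_of_le_left (le_max_left _ _)) j
      _ ≤ D ^ (j + 1) := pow_le_pow_right₀ (le_max_of_le_left (le_max_right _ _)) j.le_succ

theorem le_pow_mul_of_succ_le_pow_mul {M : ℕ → ℝ} (hnonneg : ∀ j, 0 ≤ M j) {D : ℝ}
    (hD : 1 ≤ D) (hM : ∀ j, M (j + 1) ≤ D ^ (j + 1) * M j) (n k : ℕ) :
    M (k + n) ≤ D ^ (n * (k + n)) * M k := by
  induction n with
  | zero => simp
  | succ n ih =>
    calc M (k + (n + 1)) ≤ D ^ (k + n + 1) * M (k + n) := hM (k + n)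
      _ ≤ D ^ (k + n + 1) * (D ^ (n * (k + n)) * M k) := by gcongr
      _ = D ^ (k + n + 1 + n * (k + n)) * M k := by rw [pow_add]; ring
      _ ≤ D ^ ((n + 1) * (k + (n + 1))) * M k :=
        mul_le_mul_of_nonneg_right (pow_le_pow_right₀ hD (by ring_nf; omega)) (hnonneg k)

theorem rpow_neg_mul_hFun_le_mul_hFun {M : ℕ → ℝ} (hpos : ∀ j, 0 < M j) {n : ℕ} {C K ν : ℝ}
    (hC : 1 ≤ C) (hK : 1 ≤ K) (hν : 0 ≤ ν) (hνn : ν ≤ n)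
    (hshift : ∀ k, M (k + n) ≤ C * K ^ k * M k) {t : ℝ} (ht : 0 < t) :
    t ^ (-ν) * hFun M t ≤ C * hFun M (K * t) := by
  refine le_mul_hFun (by linarith) (by positivity) fun k => ?_
  rcases le_total t 1 with ht1 | ht1
  · have htν : t ^ (-ν) * t ^ n ≤ 1 := by
      rw [← Real.rpow_add_natCast ht.ne']
      exact Real.rpow_le_one ht.le ht1 (by linarith)
    calc t ^ (-ν) * hFun M t ≤ t ^ (-ν) * (t ^ (k + n) * M (k + n)) := by
          gcongr
          exact hFun_le_pow_mul hpos ht (k + n)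
      _ = (t ^ (-ν) * t ^ n) * (t ^ k * M (k + n)) := by ring
      _ ≤ 1 * (t ^ k * (C * K ^ k * M k)) :=
          mul_le_mul htν (mul_le_mul_of_nonneg_left (hshift k) (pow_nonneg ht.le k))
            (mul_nonneg (pow_nonneg ht.le k) (hpos _).le) zero_le_one
      _ = C * ((K * t) ^ k * M k) := by ring
  · calc t ^ (-ν) * hFun M t ≤ hFun M t :=
          mul_le_of_le_one_left (hFun_nonneg hpos ht)
            (Real.rpow_le_one_of_one_le_of_nonpos ht1 (by linarith))
      _ ≤ t ^ k * M k := hFun_le_pow_mul hpos ht k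
      _ ≤ C * (K ^ k * (t ^ k * M k)) := by
          have hterm : 0 ≤ t ^ k * M k := mul_nonneg (pow_nonneg ht.le k) (hpos k).le
          have hKk : 1 ≤ K ^ k := one_le_pow₀ hK
          exact (le_mul_of_one_le_left hterm hKk).trans
            (le_mul_of_one_le_left (mul_nonneg (zero_le_one.trans hKk) hterm) hC)
      _ = C * ((K * t) ^ k * M k) := by ring

theorem hFun_negative_power_bound_general
    (M : ℕ → ℝ) (hpos : ∀ j, 0 < M j)
    (hder : ∃ A : ℝ, ∀ j : ℕ, 1 ≤ j → (M (j+1) / M j) ^ ((1:ℝ)/(j:ℝ)) ≤ A) :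
    ∀ ν : ℝ, 0 < ν → ∃ C > (0:ℝ), ∃ K ≥ (1:ℝ), ∀ t : ℝ, 0 < t →
      t ^ (-ν) * hFun M t ≤ C * hFun M (K * t) := by
  intro ν hν
  obtain ⟨D, hD, hM⟩ := exists_succ_le_pow_mul_of_derivable hpos hder
  set n := ⌈ν⌉₊
  have hshift : ∀ k, M (k + n) ≤ D ^ (n * n) * (D ^ n) ^ k * M k := fun k => by
    convert le_pow_mul_of_succ_le_pow_mul (fun j => (hpos j).le) hD hM n k using 2
    rw [← pow_mul, ← pow_add]
    ring_nf
  refine ⟨D ^ (n * n), by positivity, D ^ n, one_le_pow₀ hD, fun t ht => ?_⟩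
  exact rpow_neg_mul_hFun_le_mul_hFun hpos (one_le_pow₀ hD) (one_le_pow₀ hD) hν.le
    (Nat.le_ceil ν) hshift ht

/-- Under the derivability condition, `t^{-ν}·h_M(t) ≤ C(ν)·h_M(K(ν)·t)`. -/
theorem hFun_negative_power_bound
    (M : ℕ → ℝ) (hpos : ∀ j, 0 < M j) (hM0 : M 0 = 1) (hmono : Monotone M)
    (hlc : ∀ j : ℕ, (M (j+1))^2 ≤ M j * M (j+2))
    (hder : ∃ A : ℝ, ∀ j : ℕ, 1 ≤ j → (M (j+1) / M j) ^ ((1:ℝ)/(j:ℝ)) ≤ A) :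
    ∀ ν : ℝ, 0 < ν → ∃ C > (0:ℝ), ∃ K ≥ (1:ℝ), ∀ t : ℝ, 0 < t →
      t ^ (-ν) * hFun M t ≤ C * hFun M (K * t) :=
  hFun_negative_power_bound_general M hpos hder
end
end

section
/- For real numbers α ≥ 0 and β ≥ 0, let M_j = (j!)^α·(ln(j+e))^{β·j}. Then M_0 = 1, M is increasing, logarithmically convex (M_j^2 ≤ M_{j-1}·M_{j+1} for j ≥ 1), and has moderate growth (sup_{j+k≥1} (M_{j+k}/(M_j·M_k))^{1/(j+k)} < ∞); moreover ∑_{j≥0} M_j/((j+1)·M_{j+1}) = ∞ if and only if α = 0 and β ≤ 1. -/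
open Set Filter Topology

noncomputable section

/-- The sequence `M_j = (j!)^α·(ln(j+e))^{βj}`. -/
def Mab (α β : ℝ) : ℕ → ℝ := fun j =>
  (Nat.factorial j : ℝ) ^ α * Real.log ((j:ℝ) + Real.exp 1) ^ (β * (j:ℝ))

/-!
With `L x = log (x + e)` and `φ x = x log (L x)` one has `M_j = exp (α log j! + β φ j)`, so each
property of `M` becomes an additive statement about the exponent. For the factorial part this is
`(j+1)! = (j+1) j!` and `(j+k)! ≤ 2^(j+k) j! k!`. For `φ` everything rests on
`log L y - log L x ≤ (y - x) / ((x + e) L x)`, a consequence of `log t ≤ t - 1`: it gives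
`φ (j+k) ≤ φ j + φ k + (j + k)` and `log L (j+1) ≤ φ (j+1) - φ j ≤ log L j + 1`, while `φ` is convex
because `φ' = (log L + 1 / L) - e / ((x + e) L)` is a sum of two monotone functions.
Hence `M_j / ((j+1) M_{j+1})` lies between constant multiples of `(j+1)^(-1-α) (L j)^(-β)` and
`(j+1)^(-1-α) (L (j+1))^(-β)`. For `α > 0` it is dominated by a `p`-series; for `α = 0` it is
compared with the increments of the telescoping sequences `log L j → ∞` (when `β ≤ 1`) and
`L j ^ (1 - β) ≥ 0` (when `β > 1`).
-/

open Real
open scoped Nat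

lemma log_sub_log_le_div {a b : ℝ} (ha : 0 < a) (hb : 0 < b) :
    log b - log a ≤ (b - a) / a := by
  rw [← log_div hb.ne' ha.ne', sub_div, div_self ha.ne']
  exact log_le_sub_one_of_pos (div_pos hb ha)

lemma div_le_log_sub_log {a b : ℝ} (ha : 0 < a) (hb : 0 < b) :
    (b - a) / b ≤ log b - log a := by
  have h := log_sub_log_le_div hb ha
  rw [← neg_sub b a, neg_div] at h
  linarith

lemma sub_mul_exp_le_exp_sub (x y : ℝ) : (y - x) * exp x ≤ exp y - exp x := by
  have h := mul_le_mul_of_nonneg_right (add_one_le_exp (y - x)) (exp_pos x).le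
  rw [← exp_add, sub_add_cancel] at h
  linarith

lemma monotoneOn_log_add_inv : MonotoneOn (fun t : ℝ => log t + t⁻¹) (Ici 1) := by
  intro s (hs : 1 ≤ s) t (ht : 1 ≤ t) hst
  have h := div_le_log_sub_log (zero_lt_one.trans_le hs) (zero_lt_one.trans_le ht)
  have : s⁻¹ - t⁻¹ ≤ (t - s) / t := by
    rw [inv_sub_inv (by positivity) (by positivity)]
    exact div_le_div_of_nonneg_left (by linarith) (by positivity)
      (le_mul_of_one_le_left (by positivity) hs)
  dsimp only
  linarith

lemma not_summable_of_tendsto_of_sub_le {a f : ℕ → ℝ} (ha : Tendsto a atTop atTop)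
    (h : ∀ n, a (n + 1) - a n ≤ f n) : ¬ Summable f := by
  intro hf
  have hpartial : ∀ n, a n - a 0 ≤ ∑ i ∈ Finset.range n, f i := fun n => by
    rw [← Finset.sum_range_sub a n]
    exact Finset.sum_le_sum fun i _ => h i
  have : Tendsto (fun n => ∑ i ∈ Finset.range n, f i) atTop atTop :=
    tendsto_atTop_mono hpartial (tendsto_atTop_add_const_right _ _ ha)
  exact not_tendsto_nhds_of_tendsto_atTop this _ hf.hasSum.tendsto_sum_nat

lemma summable_of_le_sub {f b : ℕ → ℝ} (hf : ∀ n, 0 ≤ f n) (hb : ∀ n, 0 ≤ b n)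
    (h : ∀ n, f n ≤ b n - b (n + 1)) : Summable f := by
  refine summable_of_sum_range_le hf (c := b 0) fun n => ?_
  calc ∑ i ∈ Finset.range n, f i ≤ ∑ i ∈ Finset.range n, (b i - b (i + 1)) :=
        Finset.sum_le_sum fun i _ => h i
    _ = b 0 - b n := Finset.sum_range_sub' b n
    _ ≤ b 0 := sub_le_self _ (hb n)

lemma factorial_add_le (j k : ℕ) : (j + k)! ≤ 2 ^ (j + k) * j ! * k ! := by
  rw [← Nat.add_choose_mul_factorial_mul_factorial j k]
  gcongr
  exact Nat.choose_le_two_pow _ _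

lemma log_factorial_succ (n : ℕ) : log ((n + 1)! : ℝ) = log (n + 1) + log (n ! : ℝ) := by
  rw [Nat.factorial_succ, Nat.cast_mul, log_mul (by positivity) (by positivity)]
  push_cast
  ring

def shiftedLog (x : ℝ) : ℝ := log (x + exp 1)

def logLogWeight (x : ℝ) : ℝ := x * log (shiftedLog x)

section shiftedLog

variable {x y : ℝ}

lemma one_le_shiftedLog (hx : 0 ≤ x) : 1 ≤ shiftedLog x := by
  rw [shiftedLog, le_log_iff_exp_le (by positivity)]
  linarith

lemma shiftedLog_pos (hx : 0 ≤ x) : 0 < shiftedLog x :=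
  zero_lt_one.trans_le (one_le_shiftedLog hx)

lemma log_shiftedLog_nonneg (hx : 0 ≤ x) : 0 ≤ log (shiftedLog x) :=
  log_nonneg (one_le_shiftedLog hx)

lemma log_shiftedLog_le_log_shiftedLog (hx : 0 ≤ x) (hxy : x ≤ y) :
    log (shiftedLog x) ≤ log (shiftedLog y) :=
  log_le_log (shiftedLog_pos hx) (log_le_log (by positivity) (by linarith))

lemma shiftedLog_sub_le (hx : 0 ≤ x) (hy : 0 ≤ y) :
    shiftedLog y - shiftedLog x ≤ (y - x) / (x + exp 1) := by
  unfold shiftedLog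
  convert log_sub_log_le_div (a := x + exp 1) (b := y + exp 1) (by positivity) (by positivity)
    using 2
  ring

lemma sub_div_le_shiftedLog_sub (hx : 0 ≤ x) (hy : 0 ≤ y) :
    (y - x) / (y + exp 1) ≤ shiftedLog y - shiftedLog x := by
  unfold shiftedLog
  convert div_le_log_sub_log (a := x + exp 1) (b := y + exp 1) (by positivity) (by positivity)
    using 2
  ring

lemma log_shiftedLog_sub_le (hx : 0 ≤ x) (hy : 0 ≤ y) :
    log (shiftedLog y) - log (shiftedLog x) ≤ (y - x) / ((x + exp 1) * shiftedLog x) :=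
  calc log (shiftedLog y) - log (shiftedLog x)
      ≤ (shiftedLog y - shiftedLog x) / shiftedLog x :=
        log_sub_log_le_div (shiftedLog_pos hx) (shiftedLog_pos hy)
    _ ≤ (y - x) / (x + exp 1) / shiftedLog x := by
        gcongr
        · exact (shiftedLog_pos hx).le
        · exact shiftedLog_sub_le hx hy
    _ = (y - x) / ((x + exp 1) * shiftedLog x) := div_div _ _ _

lemma sub_div_le_log_shiftedLog_sub (hx : 0 ≤ x) (hy : 0 ≤ y) :
    (y - x) / ((y + exp 1) * shiftedLog y) ≤ log (shiftedLog y) - log (shiftedLog x) :=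
  calc (y - x) / ((y + exp 1) * shiftedLog y)
      = (y - x) / (y + exp 1) / shiftedLog y := (div_div _ _ _).symm
    _ ≤ (shiftedLog y - shiftedLog x) / shiftedLog y := by
        gcongr
        · exact (shiftedLog_pos hy).le
        · exact sub_div_le_shiftedLog_sub hx hy
    _ ≤ log (shiftedLog y) - log (shiftedLog x) :=
        div_le_log_sub_log (shiftedLog_pos hx) (shiftedLog_pos hy)

lemma mul_log_shiftedLog_sub_le {c : ℝ} (hx : 0 ≤ x) (hxy : x ≤ y) (hc : 0 ≤ c)
    (hcx : c ≤ x + 1) : c * (log (shiftedLog y) - log (shiftedLog x)) ≤ y - x := by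
  have hcD : c ≤ (x + exp 1) * shiftedLog x := by
    have := add_one_le_exp (1 : ℝ)
    nlinarith [one_le_shiftedLog hx]
  calc c * (log (shiftedLog y) - log (shiftedLog x))
      ≤ c * ((y - x) / ((x + exp 1) * shiftedLog x)) :=
        mul_le_mul_of_nonneg_left (log_shiftedLog_sub_le hx (hx.trans hxy)) hc
    _ = (y - x) * (c / ((x + exp 1) * shiftedLog x)) := by ring
    _ ≤ (y - x) * 1 :=
        mul_le_mul_of_nonneg_left (div_le_one_of_le₀ hcD (hc.trans hcD)) (by linarith)
    _ = y - x := mul_one _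

lemma tendsto_log_shiftedLog : Tendsto (fun n : ℕ => log (shiftedLog n)) atTop atTop :=
  tendsto_log_atTop.comp <| tendsto_log_atTop.comp <|
    tendsto_atTop_add_const_right _ _ tendsto_natCast_atTop_atTop

/-- With `L = shiftedLog`: `p L (x+1) ^ (-p-1) / (x + 1 + e) ≤ L x ^ (-p) - L (x+1) ^ (-p)`. -/
lemma mul_exp_div_le_exp_sub {p x : ℝ} (hp : 0 ≤ p) (hx : 0 ≤ x) :
    p * exp (-((p + 1) * log (shiftedLog (x + 1)))) / (x + 1 + exp 1)
      ≤ exp (-(p * log (shiftedLog x))) - exp (-(p * log (shiftedLog (x + 1)))) := by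
  set u := log (shiftedLog x)
  set v := log (shiftedLog (x + 1))
  have hstep : exp (-v) / (x + 1 + exp 1) ≤ v - u := by
    have h := sub_div_le_log_shiftedLog_sub hx (by linarith : 0 ≤ x + 1)
    have hL := shiftedLog_pos (by linarith : 0 ≤ x + 1)
    rw [add_sub_cancel_left] at h
    calc exp (-v) / (x + 1 + exp 1) = 1 / ((x + 1 + exp 1) * shiftedLog (x + 1)) := by
          rw [exp_neg, show exp v = shiftedLog (x + 1) from exp_log hL]
          field_simp
      _ ≤ v - u := h
  have htangent := sub_mul_exp_le_exp_sub (-(p * v)) (-(p * u))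
  calc p * exp (-((p + 1) * v)) / (x + 1 + exp 1)
      = p * exp (-(p * v)) * (exp (-v) / (x + 1 + exp 1)) := by
        rw [mul_div_assoc', mul_assoc, ← exp_add]
        ring_nf
    _ ≤ p * exp (-(p * v)) * (v - u) := by gcongr
    _ ≤ exp (-(p * u)) - exp (-(p * v)) := by linarith

end shiftedLog

section logLogWeight

variable {x y : ℝ}

lemma logLogWeight_le_logLogWeight (hx : 0 ≤ x) (hxy : x ≤ y) :
    logLogWeight x ≤ logLogWeight y :=
  mul_le_mul hxy (log_shiftedLog_le_log_shiftedLog hx hxy) (log_shiftedLog_nonneg hx)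
    (hx.trans hxy)

lemma hasDerivAt_logLogWeight (hx : 0 < x) :
    HasDerivAt logLogWeight
      (log (shiftedLog x) + x / ((x + exp 1) * shiftedLog x)) x := by
  have hL : HasDerivAt shiftedLog (1 / (x + exp 1)) x :=
    ((hasDerivAt_id x).add_const (exp 1)).log (by positivity)
  refine ((hasDerivAt_id' x).mul (hL.log (shiftedLog_pos hx.le).ne')).congr_deriv ?_
  field_simp

lemma convexOn_logLogWeight : ConvexOn ℝ (Ici 0) logLogWeight := by
  have hderiv : ∀ x ∈ interior (Ici (0 : ℝ)),
      deriv logLogWeight x = (log (shiftedLog x) + (shiftedLog x)⁻¹)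
        - exp 1 / ((x + exp 1) * shiftedLog x) := by
    intro x hx
    rw [interior_Ici, mem_Ioi] at hx
    rw [(hasDerivAt_logLogWeight hx).deriv]
    have := shiftedLog_pos hx.le
    have : x + exp 1 ≠ 0 := by positivity
    field_simp
    ring
  refine MonotoneOn.convexOn_of_deriv (convex_Ici 0) ?_ ?_ ?_
  · intro x hx
    rw [mem_Ici] at hx
    have : ContinuousAt logLogWeight x :=
      continuousAt_id.mul (((continuous_add_const (exp 1)).continuousAt.log (by positivity)).log
        (shiftedLog_pos hx).ne')
    exact this.continuousWithinAt
  · rw [interior_Ici]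
    exact fun x hx => (hasDerivAt_logLogWeight hx).differentiableAt.differentiableWithinAt
  · intro x hx y hy hxy
    rw [hderiv x hx, hderiv y hy]
    rw [interior_Ici, mem_Ioi] at hx hy
    have hLxy : shiftedLog x ≤ shiftedLog y := log_le_log (by positivity) (by linarith)
    have hx1 := one_le_shiftedLog hx.le
    have h1 := monotoneOn_log_add_inv hx1 (hx1.trans hLxy) hLxy
    have h2 : exp 1 / ((y + exp 1) * shiftedLog y) ≤ exp 1 / ((x + exp 1) * shiftedLog x) := by
      gcongr
    exact sub_le_sub h1 h2

lemma logLogWeight_add_le (hx : 0 ≤ x) (hy : 0 ≤ y) :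
    logLogWeight (x + y) ≤ logLogWeight x + logLogWeight y + (x + y) := by
  have hx' := mul_log_shiftedLog_sub_le hx (le_add_of_nonneg_right hy) hx (by linarith)
  have hy' := mul_log_shiftedLog_sub_le hy (le_add_of_nonneg_left hx) hy (by linarith)
  simp only [logLogWeight]
  linarith

lemma log_shiftedLog_le_logLogWeight_add_one_sub (hx : 0 ≤ x) :
    log (shiftedLog (x + 1)) ≤ logLogWeight (x + 1) - logLogWeight x := by
  have := mul_le_mul_of_nonneg_left
    (log_shiftedLog_le_log_shiftedLog hx (by linarith : x ≤ x + 1)) hx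
  simp only [logLogWeight]
  linarith

lemma logLogWeight_add_one_sub_le (hx : 0 ≤ x) :
    logLogWeight (x + 1) - logLogWeight x ≤ log (shiftedLog x) + 1 := by
  have := mul_log_shiftedLog_sub_le hx (by linarith : x ≤ x + 1) (by linarith) le_rfl
  simp only [logLogWeight]
  linarith

lemma two_mul_logLogWeight_le (n : ℕ) :
    2 * logLogWeight (n + 1) ≤ logLogWeight n + logLogWeight (n + 2) := by
  have h := convexOn_logLogWeight.2 (mem_Ici.2 n.cast_nonneg)
    (mem_Ici.2 (by positivity : (0 : ℝ) ≤ n + 2)) (by norm_num : (0 : ℝ) ≤ 1 / 2)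
    (by norm_num : (0 : ℝ) ≤ 1 / 2) (by norm_num)
  simp only [smul_eq_mul] at h
  rw [show (1 / 2 : ℝ) * n + 1 / 2 * (n + 2) = n + 1 by ring] at h
  linarith

end logLogWeight

section Mab

variable (α β : ℝ)

lemma Mab_eq_exp (j : ℕ) :
    Mab α β j = exp (α * log (j ! : ℝ) + β * logLogWeight j) := by
  rw [Mab, show log ((j : ℝ) + exp 1) = shiftedLog j from rfl, exp_add,
    rpow_def_of_pos (by positivity), rpow_def_of_pos (shiftedLog_pos j.cast_nonneg), logLogWeight]
  ring_nf

lemma Mab_pos (j : ℕ) : 0 < Mab α β j := by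
  rw [Mab_eq_exp]
  exact exp_pos _

lemma Mab_div_succ (j : ℕ) :
    Mab α β j / ((j + 1) * Mab α β (j + 1))
      = exp (-((1 + α) * log (j + 1) + β * (logLogWeight (j + 1) - logLogWeight j))) := by
  have hj : (0 : ℝ) < j + 1 := by positivity
  have hexp : α * log ((j + 1)! : ℝ) + β * logLogWeight (j + 1)
      = α * log (j ! : ℝ) + β * logLogWeight j
        + ((1 + α) * log (j + 1) + β * (logLogWeight (j + 1) - logLogWeight j)) - log (j + 1) := by
    rw [log_factorial_succ]
    ring
  rw [Mab_eq_exp, Mab_eq_exp, Nat.cast_add_one, hexp, exp_sub, exp_log hj, exp_neg]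
  field_simp
  simp only [exp_add]

lemma Mab_div_succ_pos (j : ℕ) : 0 < Mab α β j / ((j + 1) * Mab α β (j + 1)) := by
  rw [Mab_div_succ]
  exact exp_pos _

variable {α β}

lemma monotone_Mab (hα : 0 ≤ α) (hβ : 0 ≤ β) : Monotone (Mab α β) := by
  have hfac : Monotone fun j : ℕ => log (j ! : ℝ) := fun i j hij =>
    log_le_log (by positivity) (by exact_mod_cast Nat.factorial_le hij)
  have hweight : Monotone fun j : ℕ => logLogWeight j := fun i j hij =>
    logLogWeight_le_logLogWeight i.cast_nonneg (by exact_mod_cast hij)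
  rw [funext (Mab_eq_exp α β)]
  exact exp_monotone.comp ((hfac.const_mul hα).add (hweight.const_mul hβ))

lemma Mab_sq_le (hα : 0 ≤ α) (hβ : 0 ≤ β) (j : ℕ) :
    Mab α β (j + 1) ^ 2 ≤ Mab α β j * Mab α β (j + 2) := by
  have hfac : 2 * log ((j + 1)! : ℝ) ≤ log (j ! : ℝ) + log ((j + 2)! : ℝ) := by
    rw [log_factorial_succ (j + 1), log_factorial_succ j]
    push_cast
    linarith [log_le_log (by positivity : (0 : ℝ) < j + 1) (by linarith : (j : ℝ) + 1 ≤ j + 1 + 1)]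
  have hweight := two_mul_logLogWeight_le j
  rw [Mab_eq_exp, Mab_eq_exp, Mab_eq_exp, ← exp_nat_mul, ← exp_add, exp_le_exp]
  push_cast
  nlinarith [mul_le_mul_of_nonneg_left hfac hα, mul_le_mul_of_nonneg_left hweight hβ]

lemma Mab_moderate_growth (hα : 0 ≤ α) (hβ : 0 ≤ β) {j k : ℕ} (hjk : 1 ≤ j + k) :
    (Mab α β (j + k) / (Mab α β j * Mab α β k)) ^ ((1 : ℝ) / ((j : ℝ) + (k : ℝ)))
      ≤ exp (α * log 2 + β) := by
  have hn : (0 : ℝ) < j + k := by exact_mod_cast hjk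
  have hfac : log ((j + k)! : ℝ) ≤ log (j ! : ℝ) + log (k ! : ℝ) + (j + k) * log 2 := by
    have h := log_le_log (by positivity) (by exact_mod_cast factorial_add_le j k :
      ((j + k)! : ℝ) ≤ 2 ^ (j + k) * j ! * k !)
    rw [log_mul (by positivity) (by positivity), log_mul (by positivity) (by positivity),
      log_pow] at h
    push_cast at h
    linarith
  have hweight := logLogWeight_add_le (x := j) (y := k) j.cast_nonneg k.cast_nonneg
  rw [Mab_eq_exp, Mab_eq_exp, Mab_eq_exp, ← exp_add, ← exp_sub, ← exp_mul, exp_le_exp,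
    mul_one_div, div_le_iff₀ hn]
  push_cast
  nlinarith [mul_le_mul_of_nonneg_left hfac hα, mul_le_mul_of_nonneg_left hweight hβ]

lemma summable_Mab_div_of_pos (hα : 0 < α) (hβ : 0 ≤ β) :
    Summable fun j : ℕ => Mab α β j / ((j + 1) * Mab α β (j + 1)) := by
  have hp : Summable fun j : ℕ => ((j + 1 : ℕ) : ℝ) ^ (-(1 + α)) :=
    (summable_nat_add_iff 1).2 (summable_nat_rpow.2 (by linarith))
  refine hp.of_nonneg_of_le (fun j => (Mab_div_succ_pos α β j).le) fun j => ?_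
  have hΔ := log_shiftedLog_le_logLogWeight_add_one_sub j.cast_nonneg
  have hℓ := log_shiftedLog_nonneg (by positivity : (0 : ℝ) ≤ j + 1)
  rw [Mab_div_succ, rpow_def_of_pos (by positivity), exp_le_exp]
  push_cast
  nlinarith [mul_nonneg hβ (hℓ.trans hΔ)]

lemma summable_Mab_div_of_one_lt (hβ : 1 < β) :
    Summable fun j : ℕ => Mab 0 β j / ((j + 1) * Mab 0 β (j + 1)) := by
  refine summable_of_le_sub (b := fun j : ℕ => 4 / (β - 1) * exp (-((β - 1) * log (shiftedLog j))))
    (fun j => (Mab_div_succ_pos 0 β j).le) (fun j => by positivity) fun j => ?_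
  set v := log (shiftedLog (j + 1))
  have hj : (0 : ℝ) < j + 1 := by positivity
  have hratio : Mab 0 β j / ((j + 1) * Mab 0 β (j + 1)) ≤ exp (-(β * v)) / (j + 1) := by
    rw [Mab_div_succ, show exp (-(β * v)) / (j + 1) = exp (-(β * v) - log (j + 1)) by
      rw [exp_sub, exp_log hj], exp_le_exp]
    nlinarith [log_shiftedLog_le_logLogWeight_add_one_sub j.cast_nonneg]
  have htel := mul_exp_div_le_exp_sub (by linarith : 0 ≤ β - 1) j.cast_nonneg
  have he : exp 1 ≤ 3 := by linarith [exp_one_lt_d9]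
  push_cast
  calc Mab 0 β j / ((j + 1) * Mab 0 β (j + 1)) ≤ exp (-(β * v)) / (j + 1) := hratio
    _ ≤ 4 * exp (-(β * v)) / (j + 1 + exp 1) := by
        rw [div_le_div_iff₀ hj (by positivity)]
        nlinarith [exp_pos (-(β * v))]
    _ = 4 / (β - 1) * ((β - 1) * exp (-((β - 1 + 1) * v)) / (j + 1 + exp 1)) := by
        have : β - 1 ≠ 0 := by linarith
        rw [sub_add_cancel]
        field_simp
    _ ≤ _ := by
        rw [← mul_sub]
        exact mul_le_mul_of_nonneg_left htel (div_nonneg (by norm_num) (by linarith))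

lemma not_summable_Mab_div (hβ : β ≤ 1) :
    ¬ Summable fun j : ℕ => Mab 0 β j / ((j + 1) * Mab 0 β (j + 1)) := by
  intro hs
  refine not_summable_of_tendsto_of_sub_le tendsto_log_shiftedLog (fun j => ?_)
    (hs.mul_left (exp 1))
  have hj : (0 : ℝ) < j + 1 := by positivity
  have hL := shiftedLog_pos j.cast_nonneg
  have hstep := log_shiftedLog_sub_le j.cast_nonneg (by positivity : (0 : ℝ) ≤ j + 1)
  rw [add_sub_cancel_left] at hstep
  have hΔ := logLogWeight_add_one_sub_le (x := j) j.cast_nonneg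
  have hΔ₀ := (log_shiftedLog_nonneg (by positivity : (0 : ℝ) ≤ j + 1)).trans
    (log_shiftedLog_le_logLogWeight_add_one_sub (x := j) j.cast_nonneg)
  push_cast
  calc log (shiftedLog (j + 1)) - log (shiftedLog j)
      ≤ 1 / ((j + exp 1) * shiftedLog j) := hstep
    _ ≤ 1 / ((j + 1) * shiftedLog j) := by
        gcongr
        linarith [add_one_le_exp (1 : ℝ)]
    _ = exp 1 * exp (-(log (j + 1) + (log (shiftedLog j) + 1))) := by
        rw [exp_neg, exp_add, exp_add, exp_log hj, exp_log hL]
        field_simp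
    _ ≤ exp 1 * (Mab 0 β j / ((j + 1) * Mab 0 β (j + 1))) := by
        have hβΔ := mul_le_of_le_one_left hΔ₀ hβ
        rw [Mab_div_succ, add_zero, one_mul]
        gcongr
        linarith

end Mab

/-- The sequences `M_j = (j!)^α·(ln(j+e))^{βj}` are normalized, increasing,
log-convex, of moderate growth, and quasianalytic iff `α = 0` and `β ≤ 1`. -/
theorem Mab_properties (α β : ℝ) (hα : 0 ≤ α) (hβ : 0 ≤ β) :
    Mab α β 0 = 1 ∧
    Monotone (Mab α β) ∧
    (∀ j : ℕ, (Mab α β (j+1)) ^ 2 ≤ Mab α β j * Mab α β (j+2)) ∧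
    (∃ A : ℝ, ∀ j k : ℕ, 1 ≤ j + k →
      (Mab α β (j+k) / (Mab α β j * Mab α β k)) ^ ((1:ℝ)/((j:ℝ)+(k:ℝ))) ≤ A) ∧
    (¬ Summable (fun j : ℕ => Mab α β j / (((j:ℝ)+1) * Mab α β (j+1)))
      ↔ (α = 0 ∧ β ≤ 1)) := by
  refine ⟨by simp [Mab], monotone_Mab hα hβ, Mab_sq_le hα hβ,
    ⟨_, fun _ _ => Mab_moderate_growth hα hβ⟩, ⟨fun hdiv => ?_, ?_⟩⟩
  · obtain rfl | hα := hα.eq_or_lt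
    · exact ⟨rfl, not_lt.1 fun hβ₁ => hdiv (summable_Mab_div_of_one_lt hβ₁)⟩
    · exact absurd (summable_Mab_div_of_pos hα hβ) hdiv
  · rintro ⟨rfl, hβ₁⟩
    exact not_summable_Mab_div hβ₁
end
end
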